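/- arXiv:2501.04417 — 2 statements merged into one kernel-verified Lean document; each statement's English description precedes it below -/
import Mathlib

section
/- For every positive integer n, N_n = Σ_{d | n} A_{n/d}, where N_n is the number of numerical semigroups with Frobenius number n and A_m is the number of numerical semigroups with maximum primitive m. -/
/-- A numerical semigroup: a cofinite additive submonoid of ℕ containing 0. -/
structure NumericalSemigroup where
  carrier : Set ℕ
  zero_mem : 0 ∈ carrier
  add_mem : ∀ ⦃a b : ℕ⦄, a ∈ carrier → b ∈ carrier → a + b ∈ carrier
  cofinite : (carrierᶜ : Set ℕ).Finite

namespace NumericalSemigroup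

/-- The primitives (minimal generators): nonzero elements not expressible as a sum
of two nonzero elements. -/
def primitives (S : NumericalSemigroup) : Set ℕ :=
  {x | x ∈ S.carrier ∧ x ≠ 0 ∧
    ¬ ∃ a b : ℕ, a ∈ S.carrier ∧ b ∈ S.carrier ∧ a ≠ 0 ∧ b ≠ 0 ∧ x = a + b}

/-- The maximum primitive. -/
noncomputable def maxPrim (S : NumericalSemigroup) : ℕ := sSup (primitives S)

/-- The multiplicity: the least primitive (= least nonzero element). -/
noncomputable def multiplicity (S : NumericalSemigroup) : ℕ := sInf (primitives S)

/-- The Frobenius number: the largest gap (0 for ℕ by convention here). -/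
noncomputable def frob (S : NumericalSemigroup) : ℕ := sSup (S.carrierᶜ)

/-- The set of left elements. -/
noncomputable def lefts (S : NumericalSemigroup) : Set ℕ := S.carrier ∩ Set.Iio (frob S)

/-- The extended set of left elements. -/
noncomputable def extLefts (S : NumericalSemigroup) : Set ℕ := lefts S ∪ {frob S}

end NumericalSemigroup

open NumericalSemigroup

/-- The gcd of a set of naturals: the greatest common divisor of all its elements. -/
noncomputable def setGcd (A : Set ℕ) : ℕ := sSup {d | ∀ x ∈ A, d ∣ x}

/-- The number of numerical semigroups with maximum primitive `n`. -/
noncomputable def countMaxPrim (n : ℕ) : ℕ :=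
  {S : NumericalSemigroup | maxPrim S = n}.ncard

/-- The number of numerical semigroups with Frobenius number `n`. -/
noncomputable def countFrob (n : ℕ) : ℕ :=
  {S : NumericalSemigroup | frob S = n}.ncard

namespace NumericalSemigroup

theorem ext' {S T : NumericalSemigroup} (h : S.carrier = T.carrier) : S = T := by
  cases S; cases T; simpa using h

lemma mem_of_frob_lt (S : NumericalSemigroup) {x : ℕ} (h : frob S < x) : x ∈ S.carrier := by
  by_contra hx
  exact absurd (le_csSup S.cofinite.bddAbove (show x ∈ S.carrierᶜ from hx)) (not_le.2 h)

lemma frob_not_mem (S : NumericalSemigroup) (h : 0 < frob S) : frob S ∉ S.carrier := by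
  have hne : (S.carrierᶜ : Set ℕ).Nonempty := by
    rw [Set.nonempty_iff_ne_empty]
    intro he
    rw [frob, he, csSup_empty] at h
    exact absurd h (by simp)
  exact hne.csSup_mem S.cofinite

lemma exists_ne_zero_mem (S : NumericalSemigroup) : ∃ a ∈ S.carrier, a ≠ 0 := by
  have : S.carrier.Infinite := by
    have := S.cofinite.infinite_compl
    rwa [compl_compl] at this
  obtain ⟨b, hb, hb0⟩ := this.exists_gt 0
  exact ⟨b, hb, by omega⟩

lemma primitives_nonempty (S : NumericalSemigroup) : (primitives S).Nonempty := by
  obtain ⟨a, ha, ha0⟩ := S.exists_ne_zero_mem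
  set E := {x | x ∈ S.carrier ∧ x ≠ 0} with hE
  have hEne : E.Nonempty := ⟨a, ha, ha0⟩
  have hmem := Nat.sInf_mem hEne
  refine ⟨sInf E, hmem.1, hmem.2, ?_⟩
  rintro ⟨u, v, hu, hv, hu0, hv0, huv⟩
  have h1 : sInf E ≤ u := Nat.sInf_le ⟨hu, hu0⟩
  have h2 : sInf E ≤ v := Nat.sInf_le ⟨hv, hv0⟩
  have := hmem.2
  omega

lemma primitives_bddAbove (S : NumericalSemigroup) : BddAbove (primitives S) := by
  obtain ⟨a, ha, ha0⟩ := S.exists_ne_zero_mem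
  refine ⟨frob S + a, fun p hp => ?_⟩
  by_contra hgt
  push_neg at hgt
  have hpa : p - a ∈ S.carrier := S.mem_of_frob_lt (by omega)
  exact hp.2.2 ⟨a, p - a, ha, hpa, ha0, by omega, by omega⟩

lemma maxPrim_mem (S : NumericalSemigroup) : maxPrim S ∈ primitives S :=
  Nat.sSup_mem S.primitives_nonempty S.primitives_bddAbove

lemma le_maxPrim {S : NumericalSemigroup} {p : ℕ} (h : p ∈ primitives S) : p ≤ maxPrim S :=
  le_csSup S.primitives_bddAbove h

lemma maxPrim_pos (S : NumericalSemigroup) : 0 < maxPrim S :=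
  Nat.pos_of_ne_zero S.maxPrim_mem.2.1

lemma mem_closure_inter (S : NumericalSemigroup) :
    ∀ x ∈ S.carrier, x ∈ AddSubmonoid.closure (S.carrier ∩ Set.Iic (maxPrim S)) := by
  intro x
  induction x using Nat.strong_induction_on with
  | _ x ih =>
    intro hx
    rcases Nat.eq_zero_or_pos x with rfl | hx0
    · exact AddSubmonoid.zero_mem _
    by_cases hp : x ∈ primitives S
    · exact AddSubmonoid.subset_closure ⟨hx, le_maxPrim hp⟩
    · have : ∃ a b : ℕ, a ∈ S.carrier ∧ b ∈ S.carrier ∧ a ≠ 0 ∧ b ≠ 0 ∧ x = a + b := by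
        by_contra hc
        exact hp ⟨hx, by omega, hc⟩
      obtain ⟨a, b, ha, hb, ha0, hb0, rfl⟩ := this
      exact AddSubmonoid.add_mem _ (ih a (by omega) ha) (ih b (by omega) hb)

/-- the carrier is determined by the part up to maxPrim -/
lemma carrier_eq_closure (S : NumericalSemigroup) :
    S.carrier = ↑(AddSubmonoid.closure (S.carrier ∩ Set.Iic (maxPrim S))) := by
  apply Set.Subset.antisymm
  · exact fun x hx => S.mem_closure_inter x hx
  · have : AddSubmonoid.closure (S.carrier ∩ Set.Iic (maxPrim S)) ≤
        ⟨⟨S.carrier, fun ha hb => S.add_mem ha hb⟩, S.zero_mem⟩ :=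
      AddSubmonoid.closure_le.2 Set.inter_subset_left
    exact fun x hx => this hx

lemma dvd_one_of_dvd_inter (S : NumericalSemigroup) {e : ℕ}
    (h : ∀ x ∈ S.carrier ∩ Set.Iic (maxPrim S), e ∣ x) : e = 1 := by
  have hall : ∀ x ∈ S.carrier, e ∣ x := by
    intro x hx
    have hm : AddSubmonoid.closure (S.carrier ∩ Set.Iic (maxPrim S)) ≤
        ⟨⟨{y | e ∣ y}, fun {a b} ha hb => dvd_add ha hb⟩, dvd_zero e⟩ :=
      AddSubmonoid.closure_le.2 h
    exact hm (S.mem_closure_inter x hx)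
  have h1 : e ∣ frob S + 1 := hall _ (S.mem_of_frob_lt (by omega))
  have h2 : e ∣ frob S + 2 := hall _ (S.mem_of_frob_lt (by omega))
  have he1 : e ∣ 1 := by simpa using Nat.dvd_sub h2 h1
  exact Nat.dvd_one.mp he1

end NumericalSemigroup

section SetGcd

variable {A : Set ℕ}

lemma setGcd_bddAbove (hA : ∃ a ∈ A, a ≠ 0) : BddAbove {d | ∀ x ∈ A, d ∣ x} := by
  obtain ⟨a, ha, ha0⟩ := hA
  exact ⟨a, fun e he => Nat.le_of_dvd (Nat.pos_of_ne_zero ha0) (he a ha)⟩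

lemma setGcd_dvd (hA : ∃ a ∈ A, a ≠ 0) : ∀ x ∈ A, setGcd A ∣ x := by
  have : setGcd A ∈ {d | ∀ x ∈ A, d ∣ x} :=
    Nat.sSup_mem ⟨1, fun x _ => one_dvd x⟩ (setGcd_bddAbove hA)
  exact this

lemma dvd_setGcd (hA : ∃ a ∈ A, a ≠ 0) {e : ℕ} (he : ∀ x ∈ A, e ∣ x) : e ∣ setGcd A := by
  obtain ⟨a, ha, ha0⟩ := hA
  set g := setGcd A with hg
  have hgd : ∀ x ∈ A, g ∣ x := setGcd_dvd ⟨a, ha, ha0⟩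
  have hL : ∀ x ∈ A, Nat.lcm e g ∣ x := fun x hx => Nat.lcm_dvd (he x hx) (hgd x hx)
  have hLle : Nat.lcm e g ≤ g := le_csSup (setGcd_bddAbove ⟨a, ha, ha0⟩) hL
  have he0 : e ≠ 0 := by rintro rfl; exact ha0 (Nat.eq_zero_of_zero_dvd (he a ha))
  have hg0 : g ≠ 0 := by
    intro h0; exact ha0 (Nat.eq_zero_of_zero_dvd (h0 ▸ hgd a ha))
  have hL0 : Nat.lcm e g ≠ 0 := Nat.lcm_ne_zero he0 hg0
  have hgle : g ≤ Nat.lcm e g := Nat.le_of_dvd (Nat.pos_of_ne_zero hL0) (Nat.dvd_lcm_right e g)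
  have : Nat.lcm e g = g := le_antisymm hLle hgle
  exact this ▸ Nat.dvd_lcm_left e g

lemma setGcd_pos (hA : ∃ a ∈ A, a ≠ 0) : 0 < setGcd A := by
  obtain ⟨a, ha, ha0⟩ := hA
  rcases Nat.eq_zero_or_pos (setGcd A) with h0 | h
  · exact absurd (Nat.eq_zero_of_zero_dvd (h0 ▸ setGcd_dvd ⟨a, ha, ha0⟩ a ha)) ha0
  · exact h

end SetGcd

/-- elements of the subgroup closure are differences of submonoid closure elements -/
lemma exists_sub_of_mem_closure {B : Set ℕ} {x : ℤ}
    (hx : x ∈ AddSubgroup.closure ((↑) '' B : Set ℤ)) :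
    ∃ p ∈ AddSubmonoid.closure B, ∃ q ∈ AddSubmonoid.closure B, x = (p : ℤ) - q := by
  refine AddSubgroup.closure_induction ?_ ?_ ?_ ?_ hx
  · rintro y ⟨b, hb, rfl⟩
    exact ⟨b, AddSubmonoid.subset_closure hb, 0, AddSubmonoid.zero_mem _, by simp⟩
  · exact ⟨0, AddSubmonoid.zero_mem _, 0, AddSubmonoid.zero_mem _, by simp⟩
  · rintro y z _ _ ⟨p1, hp1, q1, hq1, rfl⟩ ⟨p2, hp2, q2, hq2, rfl⟩
    exact ⟨p1 + p2, AddSubmonoid.add_mem _ hp1 hp2, q1 + q2, AddSubmonoid.add_mem _ hq1 hq2,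
      by push_cast; ring⟩
  · rintro y _ ⟨p, hp, q, hq, rfl⟩
    exact ⟨q, hq, p, hp, by ring⟩

lemma exists_consecutive_of_setGcd_eq_one {B : Set ℕ} (hB : ∃ b ∈ B, b ≠ 0)
    (h : setGcd B = 1) :
    ∃ k, k ∈ AddSubmonoid.closure B ∧ k + 1 ∈ AddSubmonoid.closure B := by
  obtain ⟨c, hc⟩ := Int.subgroup_cyclic (AddSubgroup.closure ((↑) '' B : Set ℤ))
  have hdvd : ∀ x ∈ B, c.natAbs ∣ x := by
    intro x hx
    have : (x : ℤ) ∈ AddSubgroup.closure ((↑) '' B : Set ℤ) :=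
      AddSubgroup.subset_closure ⟨x, hx, rfl⟩
    rw [hc, AddSubgroup.mem_closure_singleton] at this
    obtain ⟨z, hz⟩ := this
    have hcx : c ∣ (x : ℤ) := Dvd.intro_left z hz
    simpa using Int.natAbs_dvd_natAbs.mpr hcx
  have h1 : c.natAbs ∣ 1 := h ▸ dvd_setGcd hB hdvd
  have hc1 : c = 1 ∨ c = -1 := by
    rcases Int.natAbs_eq c with he | he <;> rw [Nat.dvd_one.mp h1] at he <;> omega
  have hone : (1 : ℤ) ∈ AddSubgroup.closure ((↑) '' B : Set ℤ) := by
    rw [hc]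
    rcases hc1 with rfl | rfl
    · exact AddSubgroup.subset_closure (Set.mem_singleton _)
    · exact AddSubgroup.neg_mem _ (AddSubgroup.subset_closure (Set.mem_singleton _))
  obtain ⟨p, hp, q, hq, hpq⟩ := exists_sub_of_mem_closure hone
  have : p = q + 1 := by omega
  exact ⟨q, hq, this ▸ hp⟩

/-- Chicken McNugget style: a submonoid of ℕ containing consecutive elements is cofinite. -/
lemma cofinite_of_consecutive {M : AddSubmonoid ℕ} {k : ℕ} (hk : k ∈ M) (hk1 : k + 1 ∈ M) :
    ({x | x ∈ M}ᶜ : Set ℕ).Finite := by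
  rcases Nat.eq_zero_or_pos k with rfl | hk0
  · have : ∀ n : ℕ, n ∈ M := by
      intro n
      simpa using AddSubmonoid.nsmul_mem M hk1 n
    simp only [this]
    simp [Set.compl_eq_univ_diff]
  · apply Set.Finite.subset (Set.finite_Iio (k * k))
    intro x hx
    simp only [Set.mem_compl_iff, Set.mem_setOf_eq] at hx
    by_contra hge
    simp only [Set.mem_Iio, not_lt] at hge
    set q := x / k with hq
    set r := x % k with hr
    have hdm : k * q + r = x := Nat.div_add_mod x k
    have hrk : r < k := Nat.mod_lt x hk0
    have hqk : k ≤ q := Nat.le_div_iff_mul_le hk0 |>.mpr (by nlinarith)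
    have hxe : x = (q - r) * k + r * (k + 1) := by
      have e1 : (q - r) * k = q * k - r * k := Nat.sub_mul q r k
      have e3 : r * k ≤ q * k := Nat.mul_le_mul_right k (by omega)
      have e4 : r * (k + 1) = r * k + r := by ring
      have e5 : q * k = k * q := Nat.mul_comm q k
      omega
    apply hx
    rw [hxe]
    have h5 : (q - r) * k ∈ M := by simpa [smul_eq_mul] using AddSubmonoid.nsmul_mem M hk (q - r)
    have h6 : r * (k + 1) ∈ M := by simpa [smul_eq_mul] using AddSubmonoid.nsmul_mem M hk1 r
    exact AddSubmonoid.add_mem _ h5 h6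

namespace NumericalSemigroup

/-- The scaling construction: given `T`, produce the semigroup with left part
`d * (T ∩ [0, maxPrim T))` and Frobenius number `d * maxPrim T`. -/
def phi (d : ℕ) (hd : 0 < d) (T : NumericalSemigroup) : NumericalSemigroup where
  carrier := {x | (∃ t ∈ T.carrier, t < maxPrim T ∧ x = d * t) ∨ d * maxPrim T < x}
  zero_mem := Or.inl ⟨0, T.zero_mem, T.maxPrim_pos, by ring⟩
  add_mem := by
    rintro a b (⟨t1, ht1, ht1m, rfl⟩ | ha) (⟨t2, ht2, ht2m, rfl⟩ | hb)
    · rcases lt_trichotomy (t1 + t2) (maxPrim T) with h | h | h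
      · exact Or.inl ⟨t1 + t2, T.add_mem ht1 ht2, h, by ring⟩
      · exfalso
        rcases Nat.eq_zero_or_pos t1 with rfl | h1
        · omega
        rcases Nat.eq_zero_or_pos t2 with rfl | h2
        · omega
        exact T.maxPrim_mem.2.2 ⟨t1, t2, ht1, ht2, by omega, by omega, h.symm⟩
      · exact Or.inr (by
          have := (Nat.mul_lt_mul_left hd).mpr h
          have h2 : d * (t1 + t2) = d * t1 + d * t2 := Nat.mul_add d t1 t2
          omega)
    · exact Or.inr (by omega)
    · exact Or.inr (by omega)
    · exact Or.inr (by omega)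
  cofinite := by
    apply Set.Finite.subset (Set.finite_Iic (d * maxPrim T))
    intro x hx
    simp only [Set.mem_compl_iff, Set.mem_setOf_eq, not_or, not_lt] at hx
    exact hx.2

variable {d : ℕ} (hd : 0 < d) (T : NumericalSemigroup)

lemma phi_carrier (x : ℕ) :
    x ∈ (phi d hd T).carrier ↔
      (∃ t ∈ T.carrier, t < maxPrim T ∧ x = d * t) ∨ d * maxPrim T < x := Iff.rfl

lemma frob_phi : frob (phi d hd T) = d * maxPrim T := by
  have hng : d * maxPrim T ∈ ((phi d hd T).carrierᶜ : Set ℕ) := by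
    simp only [Set.mem_compl_iff, phi_carrier, not_or, not_lt]
    refine ⟨?_, le_rfl⟩
    rintro ⟨t, ht, htm, hte⟩
    have := (Nat.mul_lt_mul_left hd).mpr htm
    omega
  have hub : ∀ x ∈ ((phi d hd T).carrierᶜ : Set ℕ), x ≤ d * maxPrim T := by
    intro x hx
    simp only [Set.mem_compl_iff, phi_carrier, not_or, not_lt] at hx
    exact hx.2
  exact IsGreatest.csSup_eq ⟨hng, hub⟩

lemma extLefts_phi :
    extLefts (phi d hd T) = {x | ∃ t ∈ T.carrier, t ≤ maxPrim T ∧ x = d * t} := by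
  ext x
  simp only [extLefts, lefts, frob_phi, Set.mem_union, Set.mem_inter_iff, Set.mem_Iio,
    Set.mem_singleton_iff, phi_carrier, Set.mem_setOf_eq]
  constructor
  · rintro (⟨(⟨t, ht, htm, rfl⟩ | hgt), hlt⟩ | rfl)
    · exact ⟨t, ht, le_of_lt htm, rfl⟩
    · omega
    · exact ⟨maxPrim T, T.maxPrim_mem.1, le_rfl, rfl⟩
  · rintro ⟨t, ht, htm, rfl⟩
    rcases eq_or_lt_of_le htm with rfl | hlt
    · right; rfl
    · exact Or.inl ⟨Or.inl ⟨t, ht, hlt, rfl⟩, (Nat.mul_lt_mul_left hd).mpr hlt⟩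

lemma setGcd_extLefts_phi : setGcd (extLefts (phi d hd T)) = d := by
  have hne : ∃ a ∈ extLefts (phi d hd T), a ≠ 0 := by
    rw [extLefts_phi]
    exact ⟨d * maxPrim T, ⟨maxPrim T, T.maxPrim_mem.1, le_rfl, rfl⟩,
      Nat.mul_ne_zero (by omega) (by have := T.maxPrim_pos; omega)⟩
  have hdall : ∀ x ∈ extLefts (phi d hd T), d ∣ x := by
    rw [extLefts_phi]; rintro x ⟨t, _, _, rfl⟩; exact Dvd.intro t rfl
  have hdg : d ∣ setGcd (extLefts (phi d hd T)) := dvd_setGcd hne hdall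
  obtain ⟨k, hk⟩ := hdg
  have hkd : ∀ t ∈ T.carrier ∩ Set.Iic (maxPrim T), k ∣ t := by
    rintro t ⟨ht, htm⟩
    have : setGcd (extLefts (phi d hd T)) ∣ d * t := by
      apply setGcd_dvd hne
      rw [extLefts_phi]
      exact ⟨t, ht, htm, rfl⟩
    rw [hk] at this
    exact (mul_dvd_mul_iff_left (by omega : d ≠ 0)).mp this
  have hk1 : k = 1 := T.dvd_one_of_dvd_inter hkd
  rw [hk, hk1, mul_one]

end NumericalSemigroup

namespace NumericalSemigroup

variable (S : NumericalSemigroup)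

lemma frob_mem_extLefts : frob S ∈ extLefts S := Or.inr rfl

lemma extLefts_subset_Iic : extLefts S ⊆ Set.Iic (frob S) := by
  rintro x (⟨_, hx⟩ | rfl)
  · exact le_of_lt (Set.mem_Iio.mp hx)
  · exact Set.self_mem_Iic

lemma extLefts_exists_ne_zero (hn : 0 < frob S) : ∃ a ∈ extLefts S, a ≠ 0 :=
  ⟨frob S, S.frob_mem_extLefts, by omega⟩

variable (hn : 0 < frob S)

/-- The inverse construction: divide the extended left part by its gcd and
take the generated submonoid. -/
noncomputable def psi : NumericalSemigroup where
  carrier := ↑(AddSubmonoid.closure ((· / setGcd (extLefts S)) '' extLefts S))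
  zero_mem := AddSubmonoid.zero_mem _
  add_mem := fun _ _ ha hb => AddSubmonoid.add_mem _ ha hb
  cofinite := by
    have hA : ∃ a ∈ extLefts S, a ≠ 0 := S.extLefts_exists_ne_zero hn
    have hd : 0 < setGcd (extLefts S) := setGcd_pos hA
    have hdvd := setGcd_dvd hA
    have hBne : ∃ b ∈ (· / setGcd (extLefts S)) '' extLefts S, b ≠ 0 := by
      refine ⟨frob S / setGcd (extLefts S), ⟨frob S, S.frob_mem_extLefts, rfl⟩, ?_⟩
      have := Nat.div_pos (Nat.le_of_dvd hn (hdvd _ S.frob_mem_extLefts)) hd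
      omega
    have hgcd1 : setGcd ((· / setGcd (extLefts S)) '' extLefts S) = 1 := by
      have he := setGcd_dvd hBne
      have hdd1 : setGcd (extLefts S) * setGcd ((· / setGcd (extLefts S)) '' extLefts S) ∣
          setGcd (extLefts S) := by
        apply dvd_setGcd hA
        intro x hx
        obtain ⟨c, hc⟩ := hdvd x hx
        have h2 : setGcd ((· / setGcd (extLefts S)) '' extLefts S) ∣ c := by
          have := he (x / setGcd (extLefts S)) ⟨x, hx, rfl⟩
          rwa [hc, Nat.mul_div_cancel_left _ hd] at this
        rw [hc]
        exact mul_dvd_mul_left _ h2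
      obtain ⟨u, hu⟩ := hdd1
      have h3 : setGcd (extLefts S) * 1 =
          setGcd (extLefts S) * (setGcd ((· / setGcd (extLefts S)) '' extLefts S) * u) := by
        rw [mul_one, ← mul_assoc]; exact hu
      have h4 := (Nat.eq_of_mul_eq_mul_left hd h3).symm
      exact Nat.eq_one_of_mul_eq_one_right h4
    obtain ⟨k, hk, hk1⟩ := exists_consecutive_of_setGcd_eq_one hBne hgcd1
    exact cofinite_of_consecutive hk hk1

lemma psi_carrier_spec1 :
    ∀ t ∈ (psi S hn).carrier,
      setGcd (extLefts S) * t ∈ S.carrier ∨ frob S ≤ setGcd (extLefts S) * t := by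
  have hA : ∃ a ∈ extLefts S, a ≠ 0 := S.extLefts_exists_ne_zero hn
  have hdvd := setGcd_dvd hA
  intro t ht
  refine AddSubmonoid.closure_induction ?_ ?_ ?_ ht
  · rintro x ⟨y, hy, rfl⟩
    rw [Nat.mul_div_cancel' (hdvd y hy)]
    rcases hy with ⟨hy1, _⟩ | rfl
    · exact Or.inl hy1
    · exact Or.inr le_rfl
  · exact Or.inl (by simpa using S.zero_mem)
  · intro a b _ _ iha ihb
    have hab : setGcd (extLefts S) * (a + b) =
        setGcd (extLefts S) * a + setGcd (extLefts S) * b := Nat.mul_add _ a b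
    rcases iha with h1 | h1
    · rcases ihb with h2 | h2
      · exact Or.inl (by rw [hab]; exact S.add_mem h1 h2)
      · exact Or.inr (by omega)
    · exact Or.inr (by omega)

lemma psi_carrier_spec2 :
    ∀ t ∈ (psi S hn).carrier,
      t ≤ frob S / setGcd (extLefts S) ∨
      ∃ a b : ℕ, a ∈ (psi S hn).carrier ∧ b ∈ (psi S hn).carrier ∧
        a ≠ 0 ∧ b ≠ 0 ∧ t = a + b := by
  intro t ht
  refine AddSubmonoid.closure_induction ?_ ?_ ?_ ht
  · rintro x ⟨y, hy, rfl⟩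
    exact Or.inl (Nat.div_le_div_right (S.extLefts_subset_Iic hy))
  · exact Or.inl (Nat.zero_le _)
  · intro a b ha hb iha ihb
    rcases Nat.eq_zero_or_pos a with rfl | ha0
    · simpa using ihb
    rcases Nat.eq_zero_or_pos b with rfl | hb0
    · simpa using iha
    exact Or.inr ⟨a, b, ha, hb, by omega, by omega, rfl⟩

lemma maxPrim_psi : maxPrim (psi S hn) = frob S / setGcd (extLefts S) := by
  have hA : ∃ a ∈ extLefts S, a ≠ 0 := S.extLefts_exists_ne_zero hn
  have hd : 0 < setGcd (extLefts S) := setGcd_pos hA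
  have hdvd := setGcd_dvd hA
  have hdn : setGcd (extLefts S) ∣ frob S := hdvd _ S.frob_mem_extLefts
  have hnm : setGcd (extLefts S) * (frob S / setGcd (extLefts S)) = frob S :=
    Nat.mul_div_cancel' hdn
  have hm0 : 0 < frob S / setGcd (extLefts S) := Nat.div_pos (Nat.le_of_dvd hn hdn) hd
  have hmmem : frob S / setGcd (extLefts S) ∈ (psi S hn).carrier :=
    AddSubmonoid.subset_closure ⟨frob S, S.frob_mem_extLefts, rfl⟩
  have hprim : frob S / setGcd (extLefts S) ∈ primitives (psi S hn) := by
    refine ⟨hmmem, by omega, ?_⟩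
    rintro ⟨a, b, ha, hb, ha0, hb0, hab⟩
    have hda : setGcd (extLefts S) * a ∈ S.carrier := by
      rcases S.psi_carrier_spec1 hn a ha with h | h
      · exact h
      · exfalso
        have : setGcd (extLefts S) * a < setGcd (extLefts S) * (frob S / setGcd (extLefts S)) :=
          (Nat.mul_lt_mul_left hd).mpr (by omega)
        omega
    have hdb : setGcd (extLefts S) * b ∈ S.carrier := by
      rcases S.psi_carrier_spec1 hn b hb with h | h
      · exact h
      · exfalso
        have : setGcd (extLefts S) * b < setGcd (extLefts S) * (frob S / setGcd (extLefts S)) :=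
          (Nat.mul_lt_mul_left hd).mpr (by omega)
        omega
    have hmem2 : setGcd (extLefts S) * a + setGcd (extLefts S) * b ∈ S.carrier :=
      S.add_mem hda hdb
    have heq : setGcd (extLefts S) * a + setGcd (extLefts S) * b = frob S := by
      rw [← hnm, hab, Nat.mul_add]
    rw [heq] at hmem2
    exact S.frob_not_mem hn hmem2
  apply IsGreatest.csSup_eq
  refine ⟨hprim, ?_⟩
  intro p hp
  rcases S.psi_carrier_spec2 hn p hp.1 with h | h
  · exact h
  · exact absurd h hp.2.2

lemma phi_psi : phi (setGcd (extLefts S)) (setGcd_pos (S.extLefts_exists_ne_zero hn))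
    (psi S hn) = S := by
  have hA : ∃ a ∈ extLefts S, a ≠ 0 := S.extLefts_exists_ne_zero hn
  have hd : 0 < setGcd (extLefts S) := setGcd_pos hA
  have hdvd := setGcd_dvd hA
  have hdn : setGcd (extLefts S) ∣ frob S := hdvd _ S.frob_mem_extLefts
  have hnm : setGcd (extLefts S) * (frob S / setGcd (extLefts S)) = frob S :=
    Nat.mul_div_cancel' hdn
  apply ext'
  ext x
  rw [phi_carrier, maxPrim_psi S hn]
  constructor
  · rintro (⟨t, ht, htm, rfl⟩ | hgt)
    · rcases S.psi_carrier_spec1 hn t ht with h | h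
      · exact h
      · exfalso
        have : setGcd (extLefts S) * t < setGcd (extLefts S) * (frob S / setGcd (extLefts S)) :=
          (Nat.mul_lt_mul_left hd).mpr htm
        omega
    · exact S.mem_of_frob_lt (by omega)
  · intro hx
    rcases lt_trichotomy x (frob S) with hlt | rfl | hgt
    · left
      have hxl : x ∈ extLefts S := Or.inl ⟨hx, hlt⟩
      have hdx : setGcd (extLefts S) ∣ x := hdvd x hxl
      refine ⟨x / setGcd (extLefts S), AddSubmonoid.subset_closure ⟨x, hxl, rfl⟩, ?_,
        (Nat.mul_div_cancel' hdx).symm⟩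
      have h1 : setGcd (extLefts S) * (x / setGcd (extLefts S)) = x := Nat.mul_div_cancel' hdx
      by_contra hge
      push_neg at hge
      have : setGcd (extLefts S) * (frob S / setGcd (extLefts S)) ≤
          setGcd (extLefts S) * (x / setGcd (extLefts S)) := Nat.mul_le_mul_left _ hge
      omega
    · exact absurd hx (S.frob_not_mem hn)
    · exact Or.inr (by omega)

end NumericalSemigroup

namespace NumericalSemigroup

lemma phi_injective {d : ℕ} (hd : 0 < d) : Function.Injective (phi d hd) := by
  intro T₁ T₂ h
  have hc : (phi d hd T₁).carrier = (phi d hd T₂).carrier := congrArg carrier h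
  have hf : d * maxPrim T₁ = d * maxPrim T₂ := by
    rw [← frob_phi hd T₁, ← frob_phi hd T₂, frob, frob, hc]
  have hm : maxPrim T₁ = maxPrim T₂ := Nat.eq_of_mul_eq_mul_left hd hf
  have key : ∀ T₁' T₂' : NumericalSemigroup, maxPrim T₁' = maxPrim T₂' →
      (phi d hd T₁').carrier = (phi d hd T₂').carrier →
      T₁'.carrier ∩ Set.Iic (maxPrim T₁') ⊆ T₂'.carrier ∩ Set.Iic (maxPrim T₂') := by
    intro T₁' T₂' hm' hc'
    rintro x ⟨hx, hxm⟩
    rcases eq_or_lt_of_le (Set.mem_Iic.mp hxm) with rfl | hlt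
    · exact ⟨hm' ▸ T₂'.maxPrim_mem.1, Set.mem_Iic.mpr (le_of_eq hm')⟩
    · have h1 : d * x ∈ (phi d hd T₁').carrier := Or.inl ⟨x, hx, hlt, rfl⟩
      rw [hc'] at h1
      rcases h1 with ⟨t, ht, htm, hte⟩ | hgt
      · have : x = t := Nat.eq_of_mul_eq_mul_left hd hte
        exact ⟨this ▸ ht, Set.mem_Iic.mpr (by omega)⟩
      · exfalso
        have h2 : d * x < d * maxPrim T₁' := (Nat.mul_lt_mul_left hd).mpr hlt
        rw [hm'] at h2
        omega
  have hinter : T₁.carrier ∩ Set.Iic (maxPrim T₁) = T₂.carrier ∩ Set.Iic (maxPrim T₂) :=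
    Set.Subset.antisymm (key T₁ T₂ hm hc) (key T₂ T₁ hm.symm hc.symm)
  apply ext'
  rw [T₁.carrier_eq_closure, T₂.carrier_eq_closure, hinter]

lemma finite_frob (n : ℕ) : {S : NumericalSemigroup | frob S = n}.Finite := by
  have hinj : Set.InjOn (fun S : NumericalSemigroup => S.carrier ∩ Set.Iic n)
      {S | frob S = n} := by
    intro S₁ h1 S₂ h2 h
    simp only [Set.mem_setOf_eq] at h1 h2
    dsimp only at h
    apply ext'
    ext x
    rcases le_or_gt x n with hx | hx
    · constructor
      · intro hmem
        have : x ∈ S₁.carrier ∩ Set.Iic n := ⟨hmem, hx⟩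
        rw [h] at this
        exact this.1
      · intro hmem
        have : x ∈ S₂.carrier ∩ Set.Iic n := ⟨hmem, hx⟩
        rw [← h] at this
        exact this.1
    · constructor
      · intro _; exact S₂.mem_of_frob_lt (by omega)
      · intro _; exact S₁.mem_of_frob_lt (by omega)
  apply Set.Finite.of_finite_image ?_ hinj
  apply Set.Finite.subset ((Set.finite_Iic n).finite_subsets)
  rintro _ ⟨S, _, rfl⟩
  exact Set.inter_subset_right

lemma finite_maxPrim (m : ℕ) : {T : NumericalSemigroup | maxPrim T = m}.Finite := by
  have hinj : Set.InjOn (fun T : NumericalSemigroup => T.carrier ∩ Set.Iic m)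
      {T | maxPrim T = m} := by
    intro T₁ h1 T₂ h2 h
    simp only [Set.mem_setOf_eq] at h1 h2
    dsimp only at h
    apply ext'
    rw [T₁.carrier_eq_closure, T₂.carrier_eq_closure, h1, h2, h]
  apply Set.Finite.of_finite_image ?_ hinj
  apply Set.Finite.subset ((Set.finite_Iic m).finite_subsets)
  rintro _ ⟨S, _, rfl⟩
  exact Set.inter_subset_right

end NumericalSemigroup

theorem countFrob_eq_sum_countMaxPrim (n : ℕ) (hn : 0 < n) :
    countFrob n = ∑ d ∈ n.divisors, countMaxPrim (n / d) := by
  classical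
  have hF : {S : NumericalSemigroup | frob S = n}.Finite := finite_frob n
  rw [countFrob, Set.ncard_eq_toFinset_card _ hF]
  have hmem : ∀ S ∈ hF.toFinset, setGcd (extLefts S) ∈ n.divisors := by
    intro S hS
    rw [Set.Finite.mem_toFinset] at hS
    have hfr : frob S = n := hS
    have hA : ∃ a ∈ extLefts S, a ≠ 0 := S.extLefts_exists_ne_zero (by omega)
    have hdv : setGcd (extLefts S) ∣ n := hfr ▸ setGcd_dvd hA _ S.frob_mem_extLefts
    exact Nat.mem_divisors.mpr ⟨hdv, by omega⟩
  rw [Finset.card_eq_sum_card_fiberwise hmem]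
  apply Finset.sum_congr rfl
  intro d hdmem
  have hd : 0 < d := Nat.pos_of_mem_divisors hdmem
  have hdvd : d ∣ n := (Nat.mem_divisors.mp hdmem).1
  rw [countMaxPrim, ← Set.ncard_image_of_injOn ((phi_injective hd).injOn),
    ← Set.ncard_coe_finset]
  congr 1
  ext S
  simp only [Finset.mem_coe, Finset.mem_filter, Set.Finite.mem_toFinset, Set.mem_setOf_eq,
    Set.mem_image]
  constructor
  · rintro ⟨hfr, hgcd⟩
    have hn' : 0 < frob S := by omega
    subst hgcd
    refine ⟨psi S hn', ?_, ?_⟩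
    · rw [maxPrim_psi S hn', hfr]
    · exact phi_psi S hn'
  · rintro ⟨T, hT, rfl⟩
    constructor
    · rw [frob_phi hd T, hT, Nat.mul_div_cancel' hdvd]
    · exact setGcd_extLefts_phi hd T
end

section
/- Let S be a numerical semigroup with multiplicity m = m(S). If the number of elements of S lying strictly between m and 2m is at least √(3m), then S satisfies Wilf's conjecture: |P(S)| · |L(S)| ≥ F(S) + 1, where P(S) is the set of primitives, L(S) = S ∩ [0, F(S)), and F(S) is the Frobenius number. -/
open NumericalSemigroup

/-!
Let `m` be the multiplicity and `F` the Frobenius number; every element of `S ∩ [m, 2m)` is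
primitive.

If `F < 2m`, let `a = |S ∩ [m, F)|`, so that `|L| = a + 1`. Each of the `m` integers in
`(F, F + m]` lies in `S` and is either primitive or the sum of an unordered pair from
`S ∩ [m, F)`, so `|P| ≥ a + m - a(a+1)/2`, and this already gives `(a + 1)|P| > F`.

If `F ≥ 2m`, let `k = ⌊F/m⌋ ≥ 2` and `t = |S ∩ [m, 2m)|`. The translates `jm + (S ∩ [m, 2m))`
for `j < k - 1` are disjoint subsets of `L`, so `|L| ≥ (k - 1)t` and `|P| ≥ t`. As `t² ≥ 3m`,
`|P||L| ≥ 3(k - 1)m ≥ (k + 1)m > F`.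
-/

namespace NumericalSemigroup

variable (S : NumericalSemigroup)

lemma isLeast_multiplicity : IsLeast {x | x ∈ S.carrier ∧ x ≠ 0} S.multiplicity := by
  set T := {x | x ∈ S.carrier ∧ x ≠ 0}
  have hT : T.Nonempty := by
    have hS : S.carrier.Infinite := by simpa using S.cofinite.infinite_compl
    obtain ⟨x, hx, hx0⟩ := hS.exists_gt 0
    exact ⟨x, hx, hx0.ne'⟩
  have hleast : IsLeast T (sInf T) := ⟨Nat.sInf_mem hT, fun x hx => Nat.sInf_le hx⟩
  have hprim : sInf T ∈ S.primitives := by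
    refine ⟨hleast.1.1, hleast.1.2, ?_⟩
    rintro ⟨a, b, ha, hb, ha0, hb0, hab⟩
    have := hleast.2 ⟨ha, ha0⟩
    have := hleast.2 ⟨hb, hb0⟩
    omega
  have hm : S.multiplicity = sInf T :=
    IsLeast.csInf_eq ⟨hprim, fun x hx => hleast.2 ⟨hx.1, hx.2.1⟩⟩
  rwa [hm]

lemma multiplicity_mem : S.multiplicity ∈ S.carrier := S.isLeast_multiplicity.1.1

lemma multiplicity_pos : 0 < S.multiplicity := Nat.pos_of_ne_zero S.isLeast_multiplicity.1.2

variable {S} in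
lemma multiplicity_le {x : ℕ} (hx : x ∈ S.carrier) (hx0 : x ≠ 0) : S.multiplicity ≤ x :=
  S.isLeast_multiplicity.2 ⟨hx, hx0⟩

variable {S} in
lemma mul_mem {x : ℕ} (hx : x ∈ S.carrier) (k : ℕ) : k * x ∈ S.carrier := by
  induction k with
  | zero => simpa using S.zero_mem
  | succ k ih => rw [Nat.succ_mul]; exact S.add_mem ih hx

variable {S} in
lemma mem_of_frob_lt_s19 {x : ℕ} (hx : S.frob < x) : x ∈ S.carrier := by
  by_contra hxS
  exact (le_csSup S.cofinite.bddAbove hxS).not_gt hx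

-- `frob` is `sSup ∅ = 0` when `S = ℕ`, so positivity is what makes it a gap.
lemma frob_notMem (hF : 0 < S.frob) : S.frob ∉ S.carrier := by
  have hne : S.carrierᶜ.Nonempty := by
    by_contra h
    rw [Set.not_nonempty_iff_eq_empty] at h
    simp [frob, h] at hF
  exact Nat.sSup_mem hne S.cofinite.bddAbove

lemma frob_pos_of_one_lt_multiplicity (hm : 1 < S.multiplicity) : 0 < S.frob := by
  have h1 : (1 : ℕ) ∉ S.carrier := fun h1 => by have := multiplicity_le h1 one_ne_zero; omega
  exact le_csSup S.cofinite.bddAbove h1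

variable {S} in
lemma mem_primitives_of_lt_two_mul {x : ℕ} (hx : x ∈ S.carrier) (hmx : S.multiplicity ≤ x)
    (hx2 : x < 2 * S.multiplicity) : x ∈ S.primitives := by
  have := S.multiplicity_pos
  refine ⟨hx, by omega, ?_⟩
  rintro ⟨u, v, hu, hv, hu0, hv0, rfl⟩
  have := multiplicity_le hu hu0
  have := multiplicity_le hv hv0
  omega

lemma primitives_subset_Iic : S.primitives ⊆ Set.Iic (S.frob + S.multiplicity) := by
  intro x hx
  by_contra hgt
  rw [Set.mem_Iic, not_le] at hgt
  have := S.multiplicity_pos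
  exact hx.2.2 ⟨S.multiplicity, x - S.multiplicity, S.multiplicity_mem,
    mem_of_frob_lt_s19 (by omega), by omega, by omega, by omega⟩

lemma primitives_finite : S.primitives.Finite :=
  (Set.finite_Iic _).subset S.primitives_subset_Iic

lemma lefts_finite : S.lefts.Finite :=
  (Set.finite_Iio _).subset Set.inter_subset_right

lemma ncard_inter_Ico_eq :
    (S.carrier ∩ Set.Ico S.multiplicity (2 * S.multiplicity)).ncard
      = (S.carrier ∩ Set.Ioo S.multiplicity (2 * S.multiplicity)).ncard + 1 := by
  have := S.multiplicity_pos
  rw [← Set.Ioo_insert_left (by omega), Set.inter_insert_of_mem S.multiplicity_mem,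
    Set.ncard_insert_of_notMem (fun h => lt_irrefl _ h.2.1)
      ((Set.finite_Ioo _ _).subset Set.inter_subset_right)]

lemma lefts_eq_insert_zero (hF : 0 < S.frob) :
    S.lefts = insert 0 (S.carrier ∩ Set.Ico S.multiplicity S.frob) := by
  ext x
  simp only [lefts, Set.mem_inter_iff, Set.mem_Iio, Set.mem_insert_iff, Set.mem_Ico]
  constructor
  · rintro ⟨hx, hxF⟩
    rcases eq_or_ne x 0 with rfl | hx0
    · exact Or.inl rfl
    · exact Or.inr ⟨hx, multiplicity_le hx hx0, hxF⟩
  · rintro (rfl | ⟨hx, -, hxF⟩)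
    · exact ⟨S.zero_mem, hF⟩
    · exact ⟨hx, hxF⟩

lemma exists_add_eq_of_notMem_primitives (hF : 0 < S.frob) {x : ℕ}
    (hx : x ∈ Set.Ioc S.frob (S.frob + S.multiplicity)) (hxP : x ∉ S.primitives) :
    ∃ u ∈ S.carrier ∩ Set.Ico S.multiplicity S.frob,
      ∃ v ∈ S.carrier ∩ Set.Ico S.multiplicity S.frob, u + v = x := by
  have hxS : x ∈ S.carrier := mem_of_frob_lt_s19 hx.1
  obtain ⟨u, v, hu, hv, hu0, hv0, rfl⟩ :
      ∃ u v, u ∈ S.carrier ∧ v ∈ S.carrier ∧ u ≠ 0 ∧ v ≠ 0 ∧ x = u + v := by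
    by_contra hne
    exact hxP ⟨hxS, by have := hx.1; omega, hne⟩
  have hum := multiplicity_le hu hu0
  have hvm := multiplicity_le hv hv0
  have hFu : u ≠ S.frob := fun h => S.frob_notMem hF (h ▸ hu)
  have hFv : v ≠ S.frob := fun h => S.frob_notMem hF (h ▸ hv)
  have := hx.2
  exact ⟨u, ⟨hu, hum, by omega⟩, v, ⟨hv, hvm, by omega⟩, rfl⟩

lemma two_mul_ncard_Ioc_diff_primitives_le (hF : 0 < S.frob) :
    2 * (Set.Ioc S.frob (S.frob + S.multiplicity) \ S.primitives).ncard
      ≤ (S.carrier ∩ Set.Ico S.multiplicity S.frob).ncard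
        * ((S.carrier ∩ Set.Ico S.multiplicity S.frob).ncard + 1) := by
  set A := S.carrier ∩ Set.Ico S.multiplicity S.frob
  have hA : A.Finite := (Set.finite_Ico _ _).subset Set.inter_subset_right
  let pairSum : Sym2 ℕ → ℕ := Sym2.lift ⟨(· + ·), add_comm⟩
  have hsub : Set.Ioc S.frob (S.frob + S.multiplicity) \ S.primitives
      ⊆ pairSum '' (hA.toFinset.sym2 : Set (Sym2 ℕ)) := by
    rintro x ⟨hx, hxP⟩
    obtain ⟨u, hu, v, hv, rfl⟩ := S.exists_add_eq_of_notMem_primitives hF hx hxP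
    exact ⟨s(u, v), by simpa [Finset.mk_mem_sym2_iff] using ⟨hu, hv⟩, rfl⟩
  have hcard : (Set.Ioc S.frob (S.frob + S.multiplicity) \ S.primitives).ncard
      ≤ (A.ncard + 1).choose 2 := by
    calc _ ≤ (pairSum '' (hA.toFinset.sym2 : Set (Sym2 ℕ))).ncard :=
          Set.ncard_le_ncard hsub (Set.toFinite _)
      _ ≤ (hA.toFinset.sym2 : Set (Sym2 ℕ)).ncard := Set.ncard_image_le (Set.toFinite _)
      _ = (A.ncard + 1).choose 2 := by
          rw [Set.ncard_coe_finset, Finset.card_sym2, ← Set.ncard_eq_toFinset_card _ hA]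
  have hchoose := Nat.add_one_mul_choose_eq A.ncard 1
  rw [Nat.choose_one_right] at hchoose
  nlinarith

lemma succ_le_mul_of_depth_two {F m a p d : ℕ} (hF : F < 2 * m) (hFa : F < m ∨ 0 < a)
    (hm : m ≤ p + d) (hd : 2 * d ≤ a * (a + 1)) : F + 1 ≤ (a + p) * (a + 1) := by
  rcases hFa with h | h <;> nlinarith

theorem wilf_of_frob_lt_two_mul (hF0 : 0 < S.frob) (hF : S.frob < 2 * S.multiplicity) :
    S.frob + 1 ≤ S.primitives.ncard * S.lefts.ncard := by
  set A := S.carrier ∩ Set.Ico S.multiplicity S.frob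
  set I := Set.Ioc S.frob (S.frob + S.multiplicity)
  have hAfin : A.Finite := (Set.finite_Ico _ _).subset Set.inter_subset_right
  have hL : S.lefts.ncard = A.ncard + 1 := by
    rw [S.lefts_eq_insert_zero hF0, Set.ncard_insert_of_notMem (fun h => by
      have := S.multiplicity_pos; have := h.2.1; omega) hAfin]
  have hP : A.ncard + (I ∩ S.primitives).ncard ≤ S.primitives.ncard := by
    have hdisj : Disjoint A (I ∩ S.primitives) :=
      Set.disjoint_left.2 fun x hxA hxI => by have := hxA.2.2; have := hxI.1.1; omega
    rw [← Set.ncard_union_eq hdisj hAfin ((Set.finite_Ioc _ _).subset Set.inter_subset_left)]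
    refine Set.ncard_le_ncard (Set.union_subset (fun x hx => ?_) Set.inter_subset_right)
      S.primitives_finite
    exact mem_primitives_of_lt_two_mul hx.1 hx.2.1 (by have := hx.2.2; omega)
  have hI : (I ∩ S.primitives).ncard + (I \ S.primitives).ncard = S.multiplicity := by
    rw [Set.ncard_inter_add_ncard_sdiff_eq_ncard I _ (Set.finite_Ioc _ _), Set.ncard_Ioc_nat]
    omega
  have hFa : S.frob < S.multiplicity ∨ 0 < A.ncard := by
    have hFm : S.frob ≠ S.multiplicity := fun h => S.frob_notMem hF0 (h ▸ S.multiplicity_mem)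
    rcases lt_or_gt_of_ne hFm with h | h
    · exact Or.inl h
    · exact Or.inr ((Set.ncard_pos hAfin).2 ⟨_, S.multiplicity_mem, le_rfl, h⟩)
  rw [hL]
  calc S.frob + 1 ≤ (A.ncard + (I ∩ S.primitives).ncard) * (A.ncard + 1) :=
        succ_le_mul_of_depth_two hF hFa hI.ge (S.two_mul_ncard_Ioc_diff_primitives_le hF0)
    _ ≤ _ := Nat.mul_le_mul_right _ hP

lemma mul_ncard_le_ncard_lefts :
    (S.frob / S.multiplicity - 1) * (S.carrier ∩ Set.Ico S.multiplicity (2 * S.multiplicity)).ncard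
      ≤ S.lefts.ncard := by
  set m := S.multiplicity
  set A := S.carrier ∩ Set.Ico m (2 * m)
  set q := S.frob / m - 1
  have hm := S.multiplicity_pos
  let f : ℕ × ℕ → ℕ := fun p => p.1 * m + p.2
  have hdiv : ∀ j x, x ∈ A → f (j, x) / m = j + 1 := fun j x hx =>
    Nat.div_eq_of_lt_le (by have := hx.2.1; simp only [f]; rw [add_mul]; omega)
      (by have := hx.2.2; simp only [f]; rw [add_mul, add_mul]; omega)
  have hinj : Set.InjOn f (Set.Iio q ×ˢ A) := by
    rintro ⟨j, x⟩ ⟨-, hx⟩ ⟨j', x'⟩ ⟨-, hx'⟩ h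
    have hj : j = j' := by have := hdiv j x hx; rw [h, hdiv j' x' hx'] at this; omega
    subst hj
    simp only [f] at h
    simp only [Prod.mk.injEq, true_and]
    omega
  have hmaps : Set.MapsTo f (Set.Iio q ×ˢ A) S.lefts := by
    rintro ⟨j, x⟩ ⟨hj, hx⟩
    refine ⟨S.add_mem (mul_mem S.multiplicity_mem j) hx.1, ?_⟩
    have hq : (j + 2) * m ≤ S.frob :=
      (Nat.mul_le_mul_right m (by simp only [Set.mem_Iio] at hj; omega)).trans
        (Nat.div_mul_le_self _ _)
    have := hx.2.2
    simp only [Set.mem_Iio, f]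
    rw [add_mul] at hq
    omega
  calc q * A.ncard = (Set.Iio q ×ˢ A).ncard := by rw [Set.ncard_prod, Set.ncard_Iio_nat]
    _ = (f '' (Set.Iio q ×ˢ A)).ncard := hinj.ncard_image.symm
    _ ≤ S.lefts.ncard := Set.ncard_le_ncard hmaps.image_subset S.lefts_finite

theorem wilf_of_two_mul_le_frob (hF : 2 * S.multiplicity ≤ S.frob)
    (ht : 3 * S.multiplicity
      ≤ (S.carrier ∩ Set.Ico S.multiplicity (2 * S.multiplicity)).ncard ^ 2) :
    S.frob + 1 ≤ S.primitives.ncard * S.lefts.ncard := by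
  have hm := S.multiplicity_pos
  have hP : (S.carrier ∩ Set.Ico S.multiplicity (2 * S.multiplicity)).ncard
      ≤ S.primitives.ncard :=
    Set.ncard_le_ncard (fun x hx => mem_primitives_of_lt_two_mul hx.1 hx.2.1 hx.2.2)
      S.primitives_finite
  have hL := S.mul_ncard_le_ncard_lefts
  set t := (S.carrier ∩ Set.Ico S.multiplicity (2 * S.multiplicity)).ncard
  obtain ⟨j, hj⟩ : ∃ j, S.frob / S.multiplicity = j + 2 :=
    ⟨S.frob / S.multiplicity - 2, by have := (Nat.le_div_iff_mul_le hm).2 hF; omega⟩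
  have hFj : S.frob < (j + 3) * S.multiplicity := by
    have := Nat.lt_div_mul_add (a := S.frob) hm
    rw [hj] at this
    linarith
  rw [hj, show j + 2 - 1 = j + 1 by omega] at hL
  calc S.frob + 1 ≤ t * ((j + 1) * t) := by nlinarith
    _ ≤ _ := Nat.mul_le_mul hP hL

end NumericalSemigroup

theorem wilf_criterion (S : NumericalSemigroup)
    (h : Real.sqrt (3 * multiplicity S)
        ≤ ((S.carrier ∩ Set.Ioo (multiplicity S) (2 * multiplicity S)).ncard : ℝ)) :
    frob S + 1 ≤ (primitives S).ncard * (lefts S).ncard := by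
  set n := (S.carrier ∩ Set.Ioo S.multiplicity (2 * S.multiplicity)).ncard
  have hn : 3 * S.multiplicity ≤ n ^ 2 := by
    exact_mod_cast (Real.sqrt_le_left (Nat.cast_nonneg n)).1 h
  have hm := S.multiplicity_pos
  obtain ⟨x, -, hx⟩ := Set.nonempty_of_ncard_ne_zero (s := S.carrier ∩ _)
    (show n ≠ 0 by rintro hn0; rw [hn0] at hn; omega)
  have hF0 := S.frob_pos_of_one_lt_multiplicity (by have := hx.1; have := hx.2; omega)
  rcases lt_or_ge S.frob (2 * S.multiplicity) with hF | hF
  · exact S.wilf_of_frob_lt_two_mul hF0 hF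
  · exact S.wilf_of_two_mul_le_frob hF (by
      rw [S.ncard_inter_Ico_eq]; exact hn.trans (Nat.pow_le_pow_left n.le_succ 2))
end
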